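/- Let C = (ζ_0, …, ζ_{p−1}) be a cycle of length p in 𝕋^d with the ζ_j pairwise distinct. Then a point (z_n)_{n∈ℕ} ∈ S_A belongs to S_A(C) if and only if dist(z_n, {ζ_0,…,ζ_{p−1}}) → 0 as n → ∞. -/

import Mathlib

open Matrix MeasureTheory Filter Topology

noncomputable section

/-- The integer lattice ℤ^d inside ℝ^d. -/
def intLattice (d : ℕ) : AddSubgroup (Fin d → ℝ) where
  carrier := {x | ∀ i, ∃ k : ℤ, x i = (k : ℝ)}
  zero_mem' := fun i => ⟨0, by simp⟩
  add_mem' := by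
    intro x y hx hy i
    obtain ⟨a, ha⟩ := hx i
    obtain ⟨b, hb⟩ := hy i
    exact ⟨a + b, by simp [ha, hb]⟩
  neg_mem' := by
    intro x hx i
    obtain ⟨a, ha⟩ := hx i
    exact ⟨-a, by simp [ha]⟩

/-- The torus ℝ^d / ℤ^d. -/
abbrev Torus (d : ℕ) := (Fin d → ℝ) ⧸ intLattice d

/-- The quotient homomorphism π : ℝ^d → 𝕋^d. -/
def torusMk (d : ℕ) : (Fin d → ℝ) →+ Torus d := QuotientAddGroup.mk' (intLattice d)

/-- A square integer matrix is expansive if all of its complex eigenvalues `μ`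
satisfy `|μ| > 1`. -/
def Expansive {d : ℕ} (A : Matrix (Fin d) (Fin d) ℤ) : Prop :=
  ∀ μ : ℂ, (Matrix.charpoly (A.map (Int.cast : ℤ → ℂ))).IsRoot μ → 1 < ‖μ‖

/-- The real matrix associated to an integer matrix. -/
def toR {d : ℕ} (A : Matrix (Fin d) (Fin d) ℤ) : Matrix (Fin d) (Fin d) ℝ :=
  A.map (Int.cast : ℤ → ℝ)

lemma latticeMap_aux {d : ℕ} (M : Matrix (Fin d) (Fin d) ℤ) :
    intLattice d ≤ (intLattice d).comap (toR M).mulVecLin.toAddMonoidHom := by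
  intro x hx
  choose k hk using hx
  intro i
  refine ⟨∑ j, M i j * k j, ?_⟩
  have : (toR M).mulVecLin.toAddMonoidHom x i = ∑ j, (M i j : ℝ) * (k j : ℝ) := by
    simp [toR, Matrix.mulVec, dotProduct, hk, Matrix.map_apply]
  rw [this]
  push_cast
  ring

/-- The endomorphism of the torus induced by an integer matrix. -/
def torusHom {d : ℕ} (M : Matrix (Fin d) (Fin d) ℤ) : Torus d →+ Torus d :=
  QuotientAddGroup.map _ _ (toR M).mulVecLin.toAddMonoidHom (latticeMap_aux M)

/-- The solenoid `S_A`, as an additive subgroup of `(𝕋^d)^ℕ`. -/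
def solenoid {d : ℕ} (A : Matrix (Fin d) (Fin d) ℤ) : AddSubgroup (ℕ → Torus d) where
  carrier := {z | ∀ n, torusHom Aᵀ (z (n + 1)) = z n}
  zero_mem' := by intro n; simp
  add_mem' := by
    intro a b ha hb n
    simp only [Pi.add_apply, map_add, ha n, hb n]
  neg_mem' := by
    intro a ha n
    simp only [Pi.neg_apply, map_neg, ha n]

/-- The shift automorphism σ_A of the solenoid (written on the ambient space). -/
def sigmaA {d : ℕ} (A : Matrix (Fin d) (Fin d) ℤ) (z : ℕ → Torus d) : ℕ → Torus d
  | 0 => torusHom Aᵀ (z 0)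
  | n + 1 => z n

/-- The embedding î : ℝ^d → S_A, î(x) = (π((Aᵀ)^{-n} x))ₙ. -/
def ihat {d : ℕ} (A : Matrix (Fin d) (Fin d) ℤ) (x : Fin d → ℝ) : ℕ → Torus d :=
  fun n => torusMk d ((((toR A)ᵀ)⁻¹ ^ n).mulVec x)

end

/-- The quotient metric on the torus: dist(πx, πy) = inf { ‖x − y − k‖ : k ∈ ℤ^d }. -/
noncomputable def torusDist (d : ℕ) (z w : Torus d) : ℝ :=
  sInf {r : ℝ | ∃ x y : Fin d → ℝ, torusMk d x = z ∧ torusMk d y = w ∧ ‖x - y‖ = r}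

/-- The set S_A(C) = ⋃_{j} (σ_A^{-j}(χ_C) + î(ℝ^d)), where χ_C is the p-periodic
sequence determined by the cycle ζ and σ_A^{-j} is the j-fold left shift. -/
def cycleCoset {d : ℕ} (p : ℕ) (A : Matrix (Fin d) (Fin d) ℤ)
    (ζ : ZMod p → Torus d) : Set (ℕ → Torus d) :=
  ⋃ j : ZMod p, Set.range fun x : Fin d → ℝ =>
    (fun n : ℕ => ζ ((n : ZMod p) + j)) + ihat A x


/-!
If `z = σ_A^{-j} χ_C + î(x)`, then `z_n - ζ_{n+j} = π((Aᵀ)^{-n} x) → 0` because `A` is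
expansive. Conversely, if `z_n` approaches the finite cycle, then, the cycle points being a
positive distance apart and `Ā` being Lipschitz, the cycle point nearest to `z_n` must be
`ζ_{n+j}` for one fixed `j` and all large `n`. The coordinates of `u = z - σ_A^{-j} χ_C` then
tend to `0`; lifting `u_n` to short vectors `w_n ∈ ℝ^d`, the defect `Aᵀ w_{n+1} - w_n` is a
lattice vector of norm `< 1`, hence `0`, and so `u = î(x)` with `x = (Aᵀ)^N w_N`.
-/

open scoped NNReal

lemma eq_natCast_add_of_map_succ {R : Type*} [AddCommGroupWithOne R] {k : ℕ → R} {N : ℕ}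
    (hk : ∀ n ≥ N, k (n + 1) = k n + 1) : ∀ n ≥ N, k n = n + (k N - N) := by
  intro n hn
  induction n, hn using Nat.le_induction with
  | base => abel
  | succ n hn ih => rw [hk n hn, ih]; push_cast; abel

section Cycle

variable {X : Type*} [MetricSpace X]

lemma exists_pos_forall_dist_lt_imp_eq {ι : Type*} [Finite ι] {ζ : ι → X}
    (hζ : Function.Injective ζ) : ∃ ε > 0, ∀ a b, dist (ζ a) (ζ b) < ε → a = b := by
  have : ∀ᶠ ε in 𝓝[>] (0 : ℝ), ∀ a b, dist (ζ a) (ζ b) < ε → a = b := by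
    simp only [eventually_all]
    intro a b
    rcases eq_or_ne a b with rfl | hab
    · exact .of_forall fun _ _ => rfl
    · filter_upwards [Ioo_mem_nhdsGT (dist_pos.2 (hζ.ne hab))] with ε hε h
      exact absurd (h.trans hε.2) (lt_irrefl _)
  exact (this.and self_mem_nhdsWithin).exists.imp fun ε h => ⟨h.2, h.1⟩

theorem exists_tendsto_dist_cycle_of_tendsto_iInf_dist {f : X → X} {L : ℝ≥0}
    (hf : LipschitzWith L f) {p : ℕ} [NeZero p] {ζ : ZMod p → X}
    (hζ : ∀ j, f (ζ (j + 1)) = ζ j) (hinj : Function.Injective ζ)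
    {z : ℕ → X} (hz : ∀ n, f (z (n + 1)) = z n)
    (h : Tendsto (fun n => ⨅ j, dist (z n) (ζ j)) atTop (𝓝 0)) :
    ∃ j, Tendsto (fun n => dist (z n) (ζ (n + j))) atTop (𝓝 0) := by
  obtain ⟨ε, hε, hsep⟩ := exists_pos_forall_dist_lt_imp_eq hinj
  choose k hk using fun n => exists_eq_ciInf_of_finite (f := fun j => dist (z n) (ζ j))
  have hδ : 0 < ε / (L + 1) := by positivity
  obtain ⟨N, hN⟩ := eventually_atTop.1 (h.eventually (gt_mem_nhds hδ))
  have hstep : ∀ n ≥ N, k (n + 1) = k n + 1 := by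
    intro n hn
    have hlip : dist (z n) (ζ (k (n + 1) - 1)) ≤ L * dist (z (n + 1)) (ζ (k (n + 1))) := by
      have := hf.dist_le_mul (z (n + 1)) (ζ (k (n + 1) - 1 + 1))
      rwa [hz, hζ, sub_add_cancel] at this
    have : k n = k (n + 1) - 1 := hsep _ _ <| calc
      dist (ζ (k n)) (ζ (k (n + 1) - 1))
          ≤ dist (z n) (ζ (k n)) + dist (z n) (ζ (k (n + 1) - 1)) := dist_triangle_left ..
      _ ≤ dist (z n) (ζ (k n)) + L * dist (z (n + 1)) (ζ (k (n + 1))) := by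
          gcongr
      _ < ε / (L + 1) + L * (ε / (L + 1)) := by
          rw [hk, hk]
          exact add_lt_add_of_lt_of_le (hN n hn) (by gcongr; exact (hN _ (by omega)).le)
      _ = ε := by field_simp; ring
    rw [this, sub_add_cancel]
  refine ⟨k N - N, (tendsto_congr' ?_).1 h⟩
  filter_upwards [eventually_ge_atTop N] with n hn
  rw [← hk n, eq_natCast_add_of_map_succ hstep n hn]

end Cycle

theorem tendsto_norm_pow_atTop_nhds_zero_of_spectralRadius_lt_one {𝔸 : Type*} [NormedRing 𝔸]
    [NormedAlgebra ℂ 𝔸] [CompleteSpace 𝔸] {a : 𝔸} (ha : spectralRadius ℂ a < 1) :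
    Tendsto (fun n => ‖a ^ n‖) atTop (𝓝 0) := by
  obtain ⟨r, har, hr1⟩ := ENNReal.lt_iff_exists_nnreal_btwn.mp ha
  have hbound : ∀ᶠ n : ℕ in atTop, ‖a ^ n‖ ≤ (r : ℝ) ^ n := by
    filter_upwards [(spectrum.gelfand_formula a).eventually (gt_mem_nhds har),
      eventually_gt_atTop 0] with n hn hn0
    have := ENNReal.rpow_lt_rpow hn (by positivity : (0 : ℝ) < n)
    rw [← ENNReal.rpow_mul, one_div_mul_cancel (by positivity), ENNReal.rpow_one,
      ENNReal.rpow_natCast, ← ENNReal.coe_pow, ENNReal.coe_lt_coe] at this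
    exact_mod_cast this.le
  exact squeeze_zero' (.of_forall fun n => norm_nonneg _) hbound
    (tendsto_pow_atTop_nhds_zero_of_lt_one r.coe_nonneg (by exact_mod_cast hr1))

lemma RingHom.map_matrix_inv {n K L : Type*} [Fintype n] [DecidableEq n] [Field K] [Field L]
    (f : K →+* L) (M : Matrix n n K) : M⁻¹.map f = (M.map f)⁻¹ := by
  have hadj := f.map_adjugate M
  have hdet := f.map_det M
  simp only [RingHom.mapMatrix_apply] at hadj hdet
  simp [Matrix.inv_def, Matrix.map_smul', hadj, hdet]

section Torus

variable {d : ℕ}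

instance intLattice_isClosed : IsClosed (intLattice d : Set (Fin d → ℝ)) := by
  have : (intLattice d : Set (Fin d → ℝ)) = ⋂ i, (· i) ⁻¹' Set.range Int.cast := by
    ext x
    simp [intLattice, eq_comm]
  rw [this]
  exact isClosed_iInter fun i => Real.isClosed_range_intCast.preimage (continuous_apply i)

lemma torusMk_eq_mk (x : Fin d → ℝ) : torusMk d x = (x : Torus d) := rfl

lemma torusDist_eq_dist (z w : Torus d) : torusDist d z w = dist z w := by
  unfold torusDist
  refine le_antisymm (le_of_forall_gt fun r hr => ?_) (le_csInf ?_ ?_)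
  · obtain ⟨m, hm, hmr⟩ := QuotientAddGroup.norm_lt_iff.mp (dist_eq_norm z w ▸ hr)
    obtain ⟨y, rfl⟩ := QuotientAddGroup.mk_surjective w
    have hmem : torusMk d (m + y) = z := by simp [torusMk_eq_mk, hm]
    refine lt_of_le_of_lt (csInf_le ?_ ⟨m + y, y, hmem, rfl, rfl⟩) (by simpa using hmr)
    exact ⟨0, by rintro r ⟨x, y, -, -, rfl⟩; positivity⟩
  · obtain ⟨x, rfl⟩ := QuotientAddGroup.mk_surjective z
    obtain ⟨y, rfl⟩ := QuotientAddGroup.mk_surjective w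
    exact ⟨_, x, y, rfl, rfl, rfl⟩
  · rintro r ⟨x, y, rfl, rfl, rfl⟩
    rw [dist_eq_norm, torusMk_eq_mk, torusMk_eq_mk, ← QuotientAddGroup.mk_sub]
    exact QuotientAddGroup.norm_mk_le_norm

lemma eq_zero_of_mem_intLattice_of_norm_lt_one {x : Fin d → ℝ} (hx : x ∈ intLattice d)
    (h : ‖x‖ < 1) : x = 0 := by
  funext i
  obtain ⟨k, hk⟩ := hx i
  have : |(k : ℝ)| < 1 := by simpa [hk] using (norm_le_pi_norm x i).trans_lt h
  simp [hk, Int.abs_lt_one_iff.mp (by exact_mod_cast this)]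

lemma exists_lipschitzWith_torusHom (M : Matrix (Fin d) (Fin d) ℤ) :
    ∃ L, LipschitzWith L (torusHom M) := by
  let T := LinearMap.toContinuousLinearMap (toR M).mulVecLin
  let g : NormedAddGroupHom (Fin d → ℝ) (Torus d) :=
    ((torusMk d).comp (toR M).mulVecLin.toAddMonoidHom).mkNormedAddGroupHom ‖T‖
      fun v => QuotientAddGroup.norm_mk_le_norm.trans (T.le_opNorm v)
  exact ⟨_, AddMonoidHomClass.lipschitz_of_bound (torusHom M) ‖g‖
    (QuotientAddGroup.norm_lift_apply_le g fun _ hx =>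
      (QuotientAddGroup.eq_zero_iff _).2 (latticeMap_aux M hx))⟩

end Torus

section MatrixSpectrum

attribute [local instance] Matrix.linftyOpNormedAddCommGroup Matrix.linftyOpNormedRing
  Matrix.linftyOpNormedAlgebra

lemma Matrix.spectralRadius_inv_lt_one {n : Type*} [Fintype n] [DecidableEq n] [Nonempty n]
    {M : Matrix n n ℂ} (hM : ∀ μ : ℂ, M.charpoly.IsRoot μ → 1 < ‖μ‖) :
    spectralRadius ℂ M⁻¹ < 1 := by
  have hunit : IsUnit M := by
    rw [← spectrum.zero_notMem_iff ℂ, Matrix.mem_spectrum_iff_isRoot_charpoly]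
    exact fun h => absurd (hM 0 h) (by simp)
  have : M⁻¹ = ↑hunit.unit⁻¹ := by rw [Matrix.coe_units_inv, hunit.unit_spec]
  refine spectrum.spectralRadius_lt_of_forall_lt _ fun μ hμ => ?_
  rw [this, ← spectrum.map_inv, Set.mem_inv, IsUnit.unit_spec,
    Matrix.mem_spectrum_iff_isRoot_charpoly] at hμ
  have hμ' := hM _ hμ
  rw [norm_inv] at hμ'
  have hpos : 0 < ‖μ‖ := norm_pos_iff.2 fun h0 => by norm_num [h0] at hμ'
  exact_mod_cast (one_lt_inv₀ hpos).mp hμ'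

namespace Expansive

variable {d : ℕ} {A : Matrix (Fin d) (Fin d) ℤ}

lemma det_ne_zero (hA : Expansive A) : A.det ≠ 0 := by
  intro h
  have hroot : (A.map (Int.cast : ℤ → ℂ)).charpoly.IsRoot 0 := by
    rw [← Matrix.mem_spectrum_iff_isRoot_charpoly, spectrum.zero_mem_iff,
      Matrix.isUnit_iff_isUnit_det]
    have := (Int.castRingHom ℂ).map_det A
    simp_all
  exact absurd (hA 0 hroot) (by simp)

lemma tendsto_inv_pow_mulVec (hA : Expansive A) (x : Fin d → ℝ) :
    Tendsto (fun n => ((toR A)ᵀ)⁻¹ ^ n *ᵥ x) atTop (𝓝 0) := by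
  rcases isEmpty_or_nonempty (Fin d) with hd | hd
  · simpa only [Subsingleton.elim _ (0 : Fin d → ℝ)] using tendsto_const_nhds
  -- Gelfand's formula is available over `ℂ` only, so we pass to complex matrices.
  set M : Matrix (Fin d) (Fin d) ℂ := (A.map (Int.cast : ℤ → ℂ))ᵀ
  have hM : spectralRadius ℂ M⁻¹ < 1 :=
    Matrix.spectralRadius_inv_lt_one (by rw [Matrix.charpoly_transpose]; exact hA)
  have hmap : (toR A)ᵀ.map Complex.ofRealHom = M := by ext; simp [M, toR]
  have hcomplex : ∀ n, (fun i => ((((toR A)ᵀ)⁻¹ ^ n *ᵥ x) i : ℂ)) =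
      M⁻¹ ^ n *ᵥ fun i => (x i : ℂ) := by
    intro n
    funext i
    rw [← Complex.ofRealHom_eq_coe, RingHom.map_mulVec, ← RingHom.mapMatrix_apply, map_pow,
      RingHom.mapMatrix_apply, RingHom.map_matrix_inv, hmap]
    rfl
  rw [tendsto_zero_iff_norm_tendsto_zero]
  refine squeeze_zero (fun n => norm_nonneg _) (fun n => ?_)
    (by simpa only [zero_mul] using
      (tendsto_norm_pow_atTop_nhds_zero_of_spectralRadius_lt_one hM).mul_const ‖x‖)
  calc ‖((toR A)ᵀ)⁻¹ ^ n *ᵥ x‖ = ‖M⁻¹ ^ n *ᵥ fun i => (x i : ℂ)‖ := by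
        rw [← hcomplex]; simp [Pi.norm_def]
    _ ≤ ‖M⁻¹ ^ n‖ * ‖fun i => (x i : ℂ)‖ := Matrix.linfty_opNorm_mulVec _ _
    _ = ‖M⁻¹ ^ n‖ * ‖x‖ := by simp [Pi.norm_def]

end Expansive

end MatrixSpectrum

section Solenoid

variable {d : ℕ} {A : Matrix (Fin d) (Fin d) ℤ}

lemma torusHom_mk (M : Matrix (Fin d) (Fin d) ℤ) (x : Fin d → ℝ) :
    torusHom M (x : Torus d) = ((toR M *ᵥ x : Fin d → ℝ) : Torus d) := rfl

lemma toR_transpose (M : Matrix (Fin d) (Fin d) ℤ) : toR Mᵀ = (toR M)ᵀ := rfl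

lemma isUnit_det_toR_transpose (hA : A.det ≠ 0) : IsUnit ((toR A)ᵀ).det := by
  have hcast : A.map (Int.cast : ℤ → ℝ) = (Int.castRingHom ℝ).mapMatrix A := rfl
  rw [Matrix.det_transpose, isUnit_iff_ne_zero, toR, hcast, ← RingHom.map_det]
  simpa using hA

lemma ihat_mem_solenoid (hA : A.det ≠ 0) (x : Fin d → ℝ) : ihat A x ∈ solenoid A := by
  intro n
  rw [ihat, ihat, torusMk_eq_mk, torusHom_mk, toR_transpose, Matrix.mulVec_mulVec, pow_succ',
    ← mul_assoc, Matrix.mul_nonsing_inv _ (isUnit_det_toR_transpose hA), one_mul]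
  rfl

lemma tendsto_ihat (hA : Expansive A) (x : Fin d → ℝ) : Tendsto (ihat A x) atTop (𝓝 0) :=
  (QuotientAddGroup.continuous_mk.tendsto' _ _ rfl).comp (hA.tendsto_inv_pow_mulVec x)

lemma eq_of_mem_solenoid_of_eventuallyEq {u w : ℕ → Torus d} (hu : u ∈ solenoid A)
    (hw : w ∈ solenoid A) (h : u =ᶠ[atTop] w) : u = w := by
  obtain ⟨N, hN⟩ := eventually_atTop.1 h
  have hdown : ∀ m n, N ≤ n + m → u n = w n := by
    intro m
    induction m with
    | zero => exact hN
    | succ m ih => intro n hn; rw [← hu n, ← hw n, ih (n + 1) (by omega)]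
  exact funext fun n => hdown N n le_add_self

lemma mem_range_ihat_of_tendsto_zero (hA : A.det ≠ 0) {u : ℕ → Torus d}
    (hu : u ∈ solenoid A) (h : Tendsto u atTop (𝓝 0)) : u ∈ Set.range (ihat A) := by
  set T := (toR A)ᵀ
  have hT := isUnit_det_toR_transpose hA
  set L := ‖LinearMap.toContinuousLinearMap T.mulVecLin‖
  have hL : ∀ v, ‖T *ᵥ v‖ ≤ L * ‖v‖ :=
    (LinearMap.toContinuousLinearMap T.mulVecLin).le_opNorm
  have hε : 0 < 1 / (L + 1) := by positivity
  obtain ⟨N, hN⟩ := eventually_atTop.1 (h.eventually (Metric.ball_mem_nhds 0 hε))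
  choose w hw hwε using fun m =>
    QuotientAddGroup.norm_lt_iff.1 (mem_ball_zero_iff.1 (hN (N + m) le_self_add))
  have hrec : ∀ m, T *ᵥ w (m + 1) = w m := by
    intro m
    refine sub_eq_zero.1 (eq_zero_of_mem_intLattice_of_norm_lt_one ?_ ?_)
    · have hmk : ((T *ᵥ w (m + 1) : Fin d → ℝ) : Torus d) = torusHom Aᵀ (w (m + 1)) := rfl
      rw [← QuotientAddGroup.eq_zero_iff, QuotientAddGroup.mk_sub, hmk, hw, hw, ← add_assoc, hu,
        sub_self]
    · calc ‖T *ᵥ w (m + 1) - w m‖ ≤ L * ‖w (m + 1)‖ + ‖w m‖ :=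
            (norm_sub_le _ _).trans (by gcongr; exact hL _)
        _ < L * (1 / (L + 1)) + 1 / (L + 1) :=
          add_lt_add_of_le_of_lt (by gcongr; exact (hwε _).le) (hwε m)
        _ = 1 := by field_simp; exact div_self (by positivity)
  have hw0 : ∀ m, w m = T⁻¹ ^ m *ᵥ w 0 := by
    intro m
    induction m with
    | zero => simp
    | succ m ih =>
      rw [pow_succ', ← Matrix.mulVec_mulVec, ← ih, ← hrec m, Matrix.mulVec_mulVec,
        Matrix.nonsing_inv_mul _ hT, Matrix.one_mulVec]
  refine ⟨T ^ N *ᵥ w 0, eq_of_mem_solenoid_of_eventuallyEq (ihat_mem_solenoid hA _) hu ?_⟩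
  filter_upwards [eventually_ge_atTop N] with n hn
  obtain ⟨m, rfl⟩ := Nat.exists_eq_add_of_le hn
  rw [← hw, hw0 m]
  change torusMk d (T⁻¹ ^ (N + m) *ᵥ T ^ N *ᵥ w 0) = _
  rw [add_comm, pow_add, ← Matrix.mulVec_mulVec, Matrix.mulVec_mulVec _ (T⁻¹ ^ N),
    Matrix.inv_pow' T N, Matrix.nonsing_inv_mul _ (by rw [Matrix.det_pow]; exact hT.pow N),
    Matrix.one_mulVec]
  rfl

end Solenoid

theorem statement4_general (d : ℕ) (A : Matrix (Fin d) (Fin d) ℤ)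
    (hA : Expansive A) (p : ℕ) (hp : 0 < p) (ζ : ZMod p → Torus d)
    (hζ : ∀ j : ZMod p, torusHom Aᵀ (ζ (j + 1)) = ζ j)
    (hdistinct : Function.Injective ζ)
    (z : ℕ → Torus d) (hz : z ∈ solenoid A) :
    z ∈ cycleCoset p A ζ ↔
      Filter.Tendsto (fun n => ⨅ j : ZMod p, torusDist d (z n) (ζ j))
        Filter.atTop (nhds 0) := by
  have : NeZero p := ⟨hp.ne'⟩
  simp_rw [torusDist_eq_dist]
  have hcycle : ∀ j : ZMod p, (fun n : ℕ => ζ (n + j)) ∈ solenoid A := fun j n => by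
    simp only [Nat.cast_succ, add_right_comm _ (1 : ZMod p), hζ]
  constructor
  · rintro ⟨_, ⟨j, rfl⟩, x, rfl⟩
    refine squeeze_zero (fun n => Real.iInf_nonneg fun _ => dist_nonneg)
      (fun n => ciInf_le (Finite.bddBelow_range _) ((n : ZMod p) + j)) ?_
    simpa [dist_eq_norm] using (tendsto_ihat hA x).norm
  · intro h
    obtain ⟨L, hL⟩ := exists_lipschitzWith_torusHom Aᵀ
    obtain ⟨j, hj⟩ := exists_tendsto_dist_cycle_of_tendsto_iInf_dist hL hζ hdistinct hz h
    obtain ⟨x, hx⟩ := mem_range_ihat_of_tendsto_zero hA.det_ne_zero (sub_mem hz (hcycle j))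
      (by simpa [tendsto_iff_dist_tendsto_zero, dist_eq_norm] using hj)
    exact Set.mem_iUnion.2 ⟨j, x, show _ + ihat A x = z by rw [hx]; abel⟩

/-- a point of the solenoid lies in S_A(C) iff its entries approach
the cycle C = {ζ_0, …, ζ_{p−1}}. -/
theorem statement4 (d : ℕ) (hd : 0 < d) (A : Matrix (Fin d) (Fin d) ℤ)
    (hA : Expansive A) (p : ℕ) (hp : 0 < p) (ζ : ZMod p → Torus d)
    (hζ : ∀ j : ZMod p, torusHom Aᵀ (ζ (j + 1)) = ζ j)
    (hdistinct : Function.Injective ζ)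
    (z : ℕ → Torus d) (hz : z ∈ solenoid A) :
    z ∈ cycleCoset p A ζ ↔
      Filter.Tendsto (fun n => ⨅ j : ZMod p, torusDist d (z n) (ζ j))
        Filter.atTop (nhds 0) :=
  statement4_general d A hA p hp ζ hζ hdistinct z hz
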